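/- arXiv:1711.03621 — 6 statements merged into one kernel-verified Lean document; each statement's English description precedes it below -/
import Mathlib

section
/- If a, b, c are all even with t = min(v₂(a), v₂(b), v₂(c)) ≤ n, then the number of solutions x ∈ ℤ/2^nℤ of a·x² + b·x + c ≡ 0 (mod 2^n) equals 2^t times the number of solutions y ∈ ℤ/2^(n−t)ℤ of (a/2^t)·y² + (b/2^t)·y + (c/2^t) ≡ 0 (mod 2^(n−t)). -/
/-!
Write `n = m + t`. The quadratic is `2^t` times `q'(x) = a'x² + b'x + c'`, and `2^t w = 0` in
`ℤ/2^(m+t)ℤ` exactly when `w` reduces to `0` modulo `2^m`. So the solutions modulo `2^(m+t)` are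
the preimage, under the surjective reduction `ℤ/2^(m+t)ℤ → ℤ/2^mℤ`, of the solutions of `q'`
modulo `2^m`; every fibre of that reduction is a coset of its kernel, which has `2^t` elements.
-/

open Polynomial

@[to_additive]
theorem MonoidHom.card_preimage_of_surjective {G H : Type*} [Group G] [Group H] (f : G →* H)
    (hf : Function.Surjective f) (s : Set H) :
    Nat.card (f ⁻¹' s) = Nat.card f.ker * Nat.card s := by
  let e := QuotientGroup.quotientKerEquivOfSurjective f hf
  have hpre : f ⁻¹' s = QuotientGroup.mk ⁻¹' (e ⁻¹' s) := rfl
  rw [hpre, Nat.card_congr (QuotientGroup.preimageMkEquivSubgroupProdSet _ _), Nat.card_prod,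
    Nat.card_preimage_of_injective e.injective (by simp [e.surjective.range_eq])]

namespace ZMod

variable (d k : ℕ)

abbrev castHomMul : ZMod (d * k) →+* ZMod d := castHom (dvd_mul_right d k) (ZMod d)

theorem castHomMul_surjective : Function.Surjective (castHomMul d k) :=
  castHom_surjective _

theorem card_ker_castHomMul [NeZero d] :
    Nat.card (castHomMul d k).toAddMonoidHom.ker = k := by
  have h := (castHomMul d k).toAddMonoidHom.card_preimage_of_surjective
    (castHomMul_surjective d k) Set.univ
  rw [Set.preimage_univ, Nat.card_univ, Nat.card_univ, Nat.card_zmod, Nat.card_zmod] at h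
  exact Nat.eq_of_mul_eq_mul_left (Nat.pos_of_neZero d) ((mul_comm _ _).trans h.symm)

theorem natCast_mul_eq_zero_iff [NeZero k] (w : ZMod (d * k)) :
    (k : ZMod (d * k)) * w = 0 ↔ castHomMul d k w = 0 := by
  obtain ⟨z, rfl⟩ := intCast_surjective w
  rw [map_intCast, ← Int.cast_natCast, ← Int.cast_mul, intCast_zmod_eq_zero_iff_dvd,
    intCast_zmod_eq_zero_iff_dvd, Nat.cast_mul, mul_comm (d : ℤ)]
  exact mul_dvd_mul_iff_left (by exact_mod_cast NeZero.ne k)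

theorem card_roots_natCast_mul [NeZero d] [NeZero k] (p : ℤ[X]) :
    Nat.card {x : ZMod (d * k) // (k : ZMod (d * k)) * aeval x p = 0} =
      k * Nat.card {y : ZMod d // aeval y p = 0} := by
  have hroots : {x : ZMod (d * k) | (k : ZMod (d * k)) * aeval x p = 0} =
      castHomMul d k ⁻¹' {y | aeval y p = 0} := by
    ext x
    rw [Set.mem_preimage, Set.mem_ofPred_eq, Set.mem_ofPred_eq, natCast_mul_eq_zero_iff]
    exact iff_of_eq (congrArg (· = 0) (aeval_algHom_apply (castHomMul d k).toIntAlgHom x p).symm)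
  rw [← Set.coe_ofPred, hroots]
  conv_rhs => rw [← card_ker_castHomMul d k]
  exact (castHomMul d k).toAddMonoidHom.card_preimage_of_surjective (castHomMul_surjective d k) _

end ZMod

theorem stmt_1_general (n : ℕ) (a b c : ℤ)
    (t : ℕ)
    (htn : t ≤ n)
    (a' b' c' : ℤ) (ha' : a = 2 ^ t * a') (hb' : b = 2 ^ t * b') (hc' : c = 2 ^ t * c') :
    Nat.card {x : ZMod (2 ^ n) // (a : ZMod (2 ^ n)) * x ^ 2 + b * x + c = 0} =
      2 ^ t * Nat.card {y : ZMod (2 ^ (n - t)) //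
        (a' : ZMod (2 ^ (n - t))) * y ^ 2 + b' * y + c' = 0} := by
  obtain ⟨m, rfl⟩ := Nat.exists_eq_add_of_le' htn
  have hfactor : ∀ x : ZMod (2 ^ m * 2 ^ t), (a : ZMod (2 ^ m * 2 ^ t)) * x ^ 2 + b * x + c =
      ((2 ^ t : ℕ) : ZMod (2 ^ m * 2 ^ t)) *
        aeval x (C a' * X ^ 2 + C b' * X + C c') := by
    intro x
    subst ha' hb' hc'
    simp only [Int.cast_mul, Int.cast_pow, Int.cast_ofNat, Nat.cast_pow, Nat.cast_ofNat,
      eq_intCast, map_add, map_mul, map_intCast, map_pow, aeval_X]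
    ring
  rw [Nat.add_sub_cancel, pow_add]
  simp only [hfactor]
  rw [ZMod.card_roots_natCast_mul]
  simp

theorem stmt_1 (n : ℕ) (hn : 1 ≤ n) (a b c : ℤ)
    (ha : 2 ∣ a) (hb : 2 ∣ b) (hc : 2 ∣ c)
    (t : ℕ) (ht : t = min (padicValInt 2 a) (min (padicValInt 2 b) (padicValInt 2 c)))
    (htn : t ≤ n)
    (a' b' c' : ℤ) (ha' : a = 2 ^ t * a') (hb' : b = 2 ^ t * b') (hc' : c = 2 ^ t * c') :
    Nat.card {x : ZMod (2 ^ n) // (a : ZMod (2 ^ n)) * x ^ 2 + b * x + c = 0} =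
      2 ^ t * Nat.card {y : ZMod (2 ^ (n - t)) //
        (a' : ZMod (2 ^ (n - t))) * y ^ 2 + b' * y + c' = 0} :=
  stmt_1_general n a b c t htn a' b' c' ha' hb' hc'
end

section
/- If a and b are odd and c is even, then the equation a·x² + b·x + c ≡ 0 (mod 2^n) has exactly two solutions in ℤ/2^nℤ, one even and one odd. -/
/-!
Since `f(u) - f(v) = (u - v)(a(u + v) + b)` for `f(x) = a x² + b x + c`, and `a(u + v) + b` is odd,
hence a unit (as `2` is nilpotent in `ℤ/2ⁿℤ`), whenever `u` and `v` have the same parity, `f` is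
injective on each parity class. Moreover `f` takes only even values: `f(x) = x(a x + b) + c` and one
of `x`, `a x + b` is even. By finiteness, `f` restricted to the even elements, and `u ↦ f(u + 1)`
restricted to them, are bijections of the even elements, so each hits `0` exactly once.
-/

open Set

section TwoNilpotent

variable {R : Type*} [CommRing R]

theorem Odd.isUnit_of_isNilpotent_two (h2 : IsNilpotent (2 : R)) {w : R} (hw : Odd w) :
    IsUnit w := by
  obtain ⟨r, rfl⟩ := hw
  exact ((Commute.all 2 r).isNilpotent_mul_right h2).isUnit_add_one

theorem Even.not_odd_of_isNilpotent_two [Nontrivial R] (h2 : IsNilpotent (2 : R)) {x : R}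
    (he : Even x) : ¬Odd x := fun ho =>
  not_isUnit_zero <| sub_self x ▸ (he.sub_odd ho).isUnit_of_isNilpotent_two h2

variable {a b c : R}

theorem eq_of_quadratic_eq_of_even_add (h2 : IsNilpotent (2 : R)) (hb : Odd b) {u v : R}
    (huv : Even (u + v)) (h : a * u ^ 2 + b * u + c = a * v ^ 2 + b * v + c) : u = v := by
  have hunit : IsUnit (a * (u + v) + b) :=
    ((huv.mul_left a).add_odd hb).isUnit_of_isNilpotent_two h2
  have hfactor : (u - v) * (a * (u + v) + b) = 0 := by linear_combination h
  exact sub_eq_zero.mp (hunit.mul_left_eq_zero.mp hfactor)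

theorem even_quadratic (ha : Odd a) (hb : Odd b) (hc : Even c) {x : R} (hx : Even x ∨ Odd x) :
    Even (a * x ^ 2 + b * x + c) := by
  have hlin : Even (x * (a * x + b)) := by
    rcases hx with he | ho
    · exact he.mul_right _
    · exact ((ha.mul ho).add_odd hb).mul_left x
  rw [show a * x ^ 2 + b * x = x * (a * x + b) by ring]
  exact hlin.add hc

theorem exists_even_zero_of_injOn_even [Finite R] {g : R → R}
    (hmaps : MapsTo g {x | Even x} {x | Even x}) (hinj : InjOn g {x | Even x}) :
    ∃ x, Even x ∧ g x = 0 :=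
  ((toFinite _).injOn_iff_bijOn_of_mapsTo hmaps).mp hinj |>.surjOn (Even.zero : Even (0 : R))

variable [Finite R]

theorem existsUnique_even_root_quadratic (h2 : IsNilpotent (2 : R)) (ha : Odd a) (hb : Odd b)
    (hc : Even c) : ∃! x : R, Even x ∧ a * x ^ 2 + b * x + c = 0 := by
  obtain ⟨x, hxe, hx⟩ := exists_even_zero_of_injOn_even (g := fun x => a * x ^ 2 + b * x + c)
    (fun u hu => even_quadratic ha hb hc (.inl hu))
    (fun u hu v hv huv => eq_of_quadratic_eq_of_even_add h2 hb (Even.add hu hv) huv)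
  exact ⟨x, ⟨hxe, hx⟩, fun z ⟨hze, hz⟩ =>
    eq_of_quadratic_eq_of_even_add h2 hb (hze.add hxe) (hz.trans hx.symm)⟩

theorem existsUnique_odd_root_quadratic (h2 : IsNilpotent (2 : R)) (ha : Odd a) (hb : Odd b)
    (hc : Even c) : ∃! y : R, Odd y ∧ a * y ^ 2 + b * y + c = 0 := by
  obtain ⟨w, hwe, hw⟩ := exists_even_zero_of_injOn_even
    (g := fun u => a * (u + 1) ^ 2 + b * (u + 1) + c)
    (fun u hu => even_quadratic ha hb hc (.inr (Even.add_one hu)))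
    (fun u hu v hv huv => add_right_cancel <| eq_of_quadratic_eq_of_even_add h2 hb
      ((Even.add_one hu).add_odd (Even.add_one hv)) huv)
  exact ⟨w + 1, ⟨hwe.add_one, hw⟩, fun z ⟨hzo, hz⟩ =>
    eq_of_quadratic_eq_of_even_add h2 hb (hzo.add_odd hwe.add_one) (hz.trans hw.symm)⟩

end TwoNilpotent

theorem ZMod.even_or_odd {m : ℕ} (x : ZMod m) : Even x ∨ Odd x := by
  obtain ⟨k, rfl⟩ := ZMod.intCast_surjective x
  exact (Int.even_or_odd k).imp (Even.map (Int.castRingHom _)) (Odd.map (Int.castRingHom _))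

theorem ZMod.isNilpotent_two_pow (n : ℕ) : IsNilpotent (2 : ZMod (2 ^ n)) :=
  ⟨n, by exact_mod_cast ZMod.natCast_self (2 ^ n)⟩

theorem stmt_5 (n : ℕ) (hn : 1 ≤ n) (a b c : ℤ)
    (ha : Odd a) (hb : Odd b) (hc : Even c) :
    ∃ x y : ZMod (2 ^ n), x ≠ y ∧ Even x ∧ Odd y ∧
      (a : ZMod (2 ^ n)) * x ^ 2 + b * x + c = 0 ∧
      (a : ZMod (2 ^ n)) * y ^ 2 + b * y + c = 0 ∧
      ∀ z : ZMod (2 ^ n), (a : ZMod (2 ^ n)) * z ^ 2 + b * z + c = 0 → z = x ∨ z = y := by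
  have : Fact (1 < 2 ^ n) := ⟨Nat.one_lt_two_pow (by omega)⟩
  have h2 := ZMod.isNilpotent_two_pow n
  have ha' := ha.map (Int.castRingHom (ZMod (2 ^ n)))
  have hb' := hb.map (Int.castRingHom (ZMod (2 ^ n)))
  have hc' := hc.map (Int.castRingHom (ZMod (2 ^ n)))
  obtain ⟨x, ⟨hxe, hx⟩, hx_unique⟩ := existsUnique_even_root_quadratic h2 ha' hb' hc'
  obtain ⟨y, ⟨hyo, hy⟩, hy_unique⟩ := existsUnique_odd_root_quadratic h2 ha' hb' hc'
  refine ⟨x, y, ?_, hxe, hyo, hx, hy, fun z hz => ?_⟩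
  · rintro rfl
    exact hxe.not_odd_of_isNilpotent_two h2 hyo
  · rcases ZMod.even_or_odd z with hze | hzo
    · exact .inl (hx_unique z ⟨hze, hz⟩)
    · exact .inr (hy_unique z ⟨hzo, hz⟩)
end

section
/- If a and b are odd, c is even, and x is an even solution of a·x² + b·x + c ≡ 0 (mod 2^n), then x = 2y where y is the unique solution of 2a·y² + b·y + c/2 ≡ 0 (mod 2^(n−1)). -/
theorem stmt_6 (n : ℕ) (hn : 2 ≤ n) (a b c : ℤ)
    (ha : Odd a) (hb : Odd b) (hc : Even c)
    (x : ℤ) (hx_even : Even x)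
    (hx : (2 ^ n : ℤ) ∣ (a * x ^ 2 + b * x + c))
    (y : ℤ)
    (hy : (2 ^ (n - 1) : ℤ) ∣ (2 * a * y ^ 2 + b * y + c / 2))
    (hy_unique : ∀ z : ℤ, (2 ^ (n - 1) : ℤ) ∣ (2 * a * z ^ 2 + b * z + c / 2) →
      z ≡ y [ZMOD 2 ^ (n - 1)]) :
    x ≡ 2 * y [ZMOD 2 ^ n] := by
  obtain ⟨t, ht⟩ := hx_even
  have hxt : x = 2 * t := by omega
  have hc2 : 2 * (c / 2) = c := Int.two_mul_ediv_two_of_even hc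
  have hpow : (2 : ℤ) ^ n = 2 * 2 ^ (n - 1) := by
    rw [← pow_succ']
    congr 1
    omega
  have ht' : (2 ^ (n - 1) : ℤ) ∣ (2 * a * t ^ 2 + b * t + c / 2) := by
    have h2 : (2 : ℤ) * (2 ^ (n - 1)) ∣ 2 * (2 * a * t ^ 2 + b * t + c / 2) := by
      rw [← hpow]
      have : 2 * (2 * a * t ^ 2 + b * t + c / 2)
          = a * x ^ 2 + b * x + c := by
        rw [hxt]; linear_combination hc2
      rw [this]; exact hx
    exact (mul_dvd_mul_iff_left (by norm_num : (2:ℤ) ≠ 0)).mp h2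
  have hmod := hy_unique t ht'
  have hdvd : (2 ^ (n - 1) : ℤ) ∣ y - t := Int.ModEq.dvd hmod
  rw [Int.modEq_iff_dvd, hpow]
  have : 2 * y - x = 2 * (y - t) := by rw [hxt]; ring
  rw [this]
  exact mul_dvd_mul_left 2 hdvd
end

section
/- For even n ≥ 4, the equation x² ≡ 2^(n−2) (mod 2^n) has exactly 2^(n/2) solutions in ℤ/2^nℤ, namely the elements x = 2^((n−2)/2)·q with q ≡ ±1 (mod 4). -/
lemma two_pow_zero' (k : ℕ) : (2 : ZMod (2^k)) ^ k = 0 := by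
  have h : ((2^k : ℕ) : ZMod (2^k)) = 0 := ZMod.natCast_self _
  push_cast at h
  exact h

lemma keyB (m : ℕ) (hm : 2 ≤ m) (q : ℤ) (hq : Odd q) :
    ((2 : ZMod (2^(m+m)))^(m-1) * (q : ZMod (2^(m+m))))^2
      = (2 : ZMod (2^(m+m)))^(m+m-2) := by
  obtain ⟨c, hc⟩ := hq
  have h0 : (2 : ZMod (2^(m+m)))^(m+m) = 0 := two_pow_zero' _
  have h1 : ((2 : ZMod (2^(m+m)))^(m-1))^2 * 4 = 0 := by
    rw [show (4 : ZMod (2^(m+m))) = 2^2 by norm_num, ← pow_mul, ← pow_add,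
      show (m-1)*2 + 2 = m + m by omega, h0]
  have h2 : ((2 : ZMod (2^(m+m)))^(m-1))^2 = (2 : ZMod (2^(m+m)))^(m+m-2) := by
    rw [← pow_mul]; congr 1; omega
  have h3 : (q : ZMod (2^(m+m)))^2 = 1 + 4 * ((c^2 + c : ℤ) : ZMod (2^(m+m))) := by
    have h4 : (q:ℤ)^2 = 1 + 4*(c^2+c) := by rw [hc]; ring
    calc (q : ZMod (2^(m+m)))^2 = (((q^2 : ℤ)) : ZMod (2^(m+m))) := by push_cast; ring
      _ = _ := by rw [h4]; push_cast; ring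
  have h1' : (2 : ZMod (2^(m+m)))^(m+m-2) * 4 = 0 := h2 ▸ h1
  rw [mul_pow, h3, h2]
  linear_combination ((c^2 + c : ℤ) : ZMod (2^(m+m))) * h1'

lemma keyF (m : ℕ) (hm : 2 ≤ m) (x : ZMod (2^(m+m)))
    (h : x^2 = (2 : ZMod (2^(m+m)))^(m+m-2)) :
    ∃ b : ℕ, x = ((2^(m-1)*(2*b+1) : ℕ) : ZMod (2^(m+m))) := by
  haveI : NeZero (2^(m+m)) := ⟨by positivity⟩
  set a : ℕ := x.val with ha
  have hx : ((a : ℕ) : ZMod (2^(m+m))) = x := by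
    rw [ha, ZMod.natCast_val, ZMod.cast_id]
  have hmod : a^2 ≡ 2^(m+m-2) [MOD 2^(m+m)] := by
    apply (ZMod.natCast_eq_natCast_iff _ _ _).mp
    push_cast [hx]
    exact h
  -- 2^(m+m-2) ∣ a^2
  have hlt : 2^(m+m-2) < 2^(m+m) := Nat.pow_lt_pow_right (by norm_num) (by omega)
  have h1 : a^2 % 2^(m+m) = 2^(m+m-2) := by
    have := hmod
    unfold Nat.ModEq at this
    rwa [Nat.mod_eq_of_lt hlt] at this
  have hdvd : 2^(m+m-2) ∣ a^2 := by
    have h2 : 2^(m+m-2) ∣ 2^(m+m) := pow_dvd_pow 2 (by omega)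
    have h3 := Nat.div_add_mod (a^2) (2^(m+m))
    rw [h1] at h3
    rw [← h3]
    exact dvd_add (h2.mul_right _) dvd_rfl
  -- 2^(m-1) ∣ a
  have hdvda : 2^(m-1) ∣ a := by
    rcases Nat.eq_zero_or_pos a with h0 | h0
    · simp [h0]
    · have hne : a^2 ≠ 0 := by positivity
      have hf := (Nat.Prime.pow_dvd_iff_le_factorization Nat.prime_two hne).mp hdvd
      rw [Nat.factorization_pow, Finsupp.smul_apply] at hf
      exact (Nat.Prime.pow_dvd_iff_le_factorization Nat.prime_two (by omega)).mpr
        (by simp at hf; omega)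
  obtain ⟨q, hq⟩ := hdvda
  -- q is odd
  have hint : ((2^(m+m) : ℕ) : ℤ) ∣ (2^(m+m-2) : ℕ) - ((a^2 : ℕ) : ℤ) :=
    (Nat.modEq_iff_dvd).mp hmod
  have hM : (2:ℤ)^(m+m) = (2:ℤ)^(m+m-2) * 4 := by
    have hp := pow_add (2:ℤ) (m+m-2) 2
    rw [show m+m-2+2 = m+m by omega] at hp
    rw [hp]; norm_num
  have hq4 : (4:ℤ) ∣ 1 - (q:ℤ)^2 := by
    have ha2 : ((a:ℤ))^2 = (2:ℤ)^(m+m-2) * (q:ℤ)^2 := by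
      rw [hq]
      push_cast
      rw [show m+m-2 = (m-1)+(m-1) by omega]
      ring
    have : (2:ℤ)^(m+m-2) * 4 ∣ (2:ℤ)^(m+m-2) * (1 - (q:ℤ)^2) := by
      rw [← hM]
      have h5 := hint
      push_cast at h5
      rw [ha2] at h5
      convert h5 using 1
      ring
    exact (mul_dvd_mul_iff_left (by positivity : (2:ℤ)^(m+m-2) ≠ 0)).mp this
  have hqodd : Odd q := by
    rcases Nat.even_or_odd q with he | ho
    · exfalso
      obtain ⟨c, hc⟩ := he
      obtain ⟨k, hk⟩ := hq4
      have hqc : (q:ℤ) = c + c := by exact_mod_cast hc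
      have hc2 : (0:ℤ) ≤ (c:ℤ)^2 := by positivity
      rw [hqc] at hk
      have : (1:ℤ) - ((c:ℤ)+(c:ℤ))^2 = 1 - 4*(c:ℤ)^2 := by ring
      rw [this] at hk
      omega
    · exact ho
  obtain ⟨b, hb⟩ := hqodd
  exact ⟨b, by rw [← hx, hq, hb]⟩
lemma keyCast (m : ℕ) (b : ℕ) :
    ((2^(m-1)*(2*b+1) : ℕ) : ZMod (2^(m+m)))
      = (2 : ZMod (2^(m+m)))^(m-1) * (((2*b+1 : ℤ)) : ZMod (2^(m+m))) := by
  push_cast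
  ring

lemma keyBnat (m : ℕ) (hm : 2 ≤ m) (b : ℕ) :
    (((2^(m-1)*(2*b+1) : ℕ) : ZMod (2^(m+m))))^2 = (2 : ZMod (2^(m+m)))^(m+m-2) := by
  rw [keyCast]
  exact keyB m hm (2*b+1) ⟨b, by ring⟩

lemma keyCount (m : ℕ) (hm : 2 ≤ m) :
    Nat.card {x : ZMod (2^(m+m)) // x^2 = (2 : ZMod (2^(m+m)))^(m+m-2)} = 2^m := by
  haveI : NeZero (2^(m+m)) := ⟨by positivity⟩
  haveI : NeZero (2^m) := ⟨by positivity⟩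
  have hMZ : ((2:ℤ)^(m+m)) = 4 * ((2:ℤ)^(m-1))^2 := by
    have hp : (2:ℤ)^((m-1)+(m-1)+2) = ((2:ℤ)^(m-1))^2 * 4 := by ring
    rw [show m+m = (m-1)+(m-1)+2 by omega, hp]; ring
  have hmZ : ((2:ℤ)^m) = 2 * (2:ℤ)^(m-1) := by
    conv_lhs => rw [show m = (m-1)+1 by omega]
    ring
  set f : ZMod (2^m) → {x : ZMod (2^(m+m)) // x^2 = (2 : ZMod (2^(m+m)))^(m+m-2)} :=
    fun t => ⟨((2^(m-1)*(2*t.val+1) : ℕ) : ZMod (2^(m+m))), keyBnat m hm t.val⟩ with hf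
  have hbij : Function.Bijective f := by
    constructor
    · intro t s hts
      have h1 : ((2^(m-1)*(2*t.val+1) : ℕ) : ZMod (2^(m+m)))
          = ((2^(m-1)*(2*s.val+1) : ℕ) : ZMod (2^(m+m))) := congrArg Subtype.val hts
      have h2 : (2^(m-1)*(2*t.val+1) : ℕ) ≡ (2^(m-1)*(2*s.val+1) : ℕ) [MOD 2^(m+m)] :=
        (ZMod.natCast_eq_natCast_iff _ _ _).mp h1
      have h3 := (Nat.modEq_iff_dvd).mp h2
      push_cast at h3
      have h4 : (2:ℤ)^m * (2:ℤ)^m ∣ (2:ℤ)^m * ((s.val:ℤ) - (t.val:ℤ)) := by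
        obtain ⟨k, hk⟩ := h3
        refine ⟨k, ?_⟩
        have : (2:ℤ)^(m-1)*(2*(s.val:ℤ)+1) - (2:ℤ)^(m-1)*(2*(t.val:ℤ)+1)
            = ((2:ℤ)^(m+m)) * k := hk
        rw [hMZ] at this
        rw [hmZ]
        linear_combination this
      have h5 : (2:ℤ)^m ∣ (s.val:ℤ) - (t.val:ℤ) :=
        (mul_dvd_mul_iff_left (by positivity : (2:ℤ)^m ≠ 0)).mp h4
      have h6 : t.val ≡ s.val [MOD 2^m] := (Nat.modEq_iff_dvd).mpr (by push_cast; exact h5)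
      have h7 : t.val = s.val := by
        have := h6
        unfold Nat.ModEq at this
        rwa [Nat.mod_eq_of_lt (ZMod.val_lt t), Nat.mod_eq_of_lt (ZMod.val_lt s)] at this
      exact ZMod.val_injective _ h7
    · rintro ⟨x, hx⟩
      obtain ⟨b, hb⟩ := keyF m hm x hx
      refine ⟨(b : ZMod (2^m)), ?_⟩
      apply Subtype.ext
      show ((2^(m-1)*(2*(b : ZMod (2^m)).val+1) : ℕ) : ZMod (2^(m+m))) = x
      rw [hb, ZMod.val_natCast]
      apply (ZMod.natCast_eq_natCast_iff _ _ _).mpr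
      apply (Nat.modEq_iff_dvd).mpr
      have hd : (2:ℤ)^m ∣ (b:ℤ) - ((b % 2^m : ℕ):ℤ) := by
        have hdd := (Nat.modEq_iff_dvd).mp (Nat.mod_modEq b (2^m))
        exact_mod_cast hdd
      obtain ⟨k, hk⟩ := hd
      refine ⟨k, ?_⟩
      generalize hgen : b % 2^m = r at hk ⊢
      push_cast
      rw [hMZ] at *
      rw [hmZ] at hk
      linear_combination (2 * (2:ℤ)^(m-1)) * hk
  calc Nat.card {x : ZMod (2^(m+m)) // x^2 = (2 : ZMod (2^(m+m)))^(m+m-2)}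
      = Nat.card (ZMod (2^m)) := (Nat.card_eq_of_bijective f hbij).symm
    _ = 2^m := Nat.card_zmod _
theorem stmt_13 (n : ℕ) (hn : 4 ≤ n) (heven : Even n) :
    (∀ x : ZMod (2 ^ n), x ^ 2 = (2 : ZMod (2 ^ n)) ^ (n - 2) ↔
      ∃ q : ℤ, (q ≡ 1 [ZMOD 4] ∨ q ≡ -1 [ZMOD 4]) ∧
        x = (2 : ZMod (2 ^ n)) ^ ((n - 2) / 2) * (q : ZMod (2 ^ n))) ∧
    Nat.card {x : ZMod (2 ^ n) // x ^ 2 = (2 : ZMod (2 ^ n)) ^ (n - 2)} = 2 ^ (n / 2) := by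
  obtain ⟨m, rfl⟩ := heven
  have hm : 2 ≤ m := by omega
  have hdiv : (m + m - 2) / 2 = m - 1 := by omega
  have hdiv2 : (m + m) / 2 = m := by omega
  constructor
  · intro x
    constructor
    · intro hx
      obtain ⟨b, hb⟩ := keyF m hm x hx
      refine ⟨(2*b+1 : ℤ), ?_, ?_⟩
      · rcases Nat.even_or_odd b with ⟨c, hc⟩ | ⟨c, hc⟩
        · left
          apply Int.modEq_iff_dvd.mpr
          exact ⟨-c, by rw [hc]; push_cast; ring⟩
        · right
          apply Int.modEq_iff_dvd.mpr
          exact ⟨-c-1, by rw [hc]; push_cast; ring⟩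
      · rw [hdiv, hb]
        push_cast
        ring
    · rintro ⟨q, hq, rfl⟩
      rw [hdiv]
      apply keyB m hm
      rcases hq with hq | hq
      · obtain ⟨k, hk⟩ := Int.modEq_iff_dvd.mp hq
        exact ⟨-2*k, by omega⟩
      · obtain ⟨k, hk⟩ := Int.modEq_iff_dvd.mp hq
        exact ⟨-2*k-1, by omega⟩
  · rw [hdiv2]
    exact keyCount m hm
end

section
/- If v₂(a) = 2j is even with 2j ≤ n − 3 and the odd part of a is congruent to 1 mod 8, then x² ≡ a (mod 2^n) has exactly 2^(j+2) solutions in ℤ/2^nℤ. -/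
/-!
Write `a = 4^j b` with `b ≡ 1 (mod 8)`. Every solution of `x² ≡ a (mod 2^n)` is divisible by `2^j`,
and `x = 2^j y` is a solution iff `y² ≡ b (mod 2^(n-2j))`. So the solutions correspond to the
residues `y mod 2^(n-j)` that reduce to a square root of `b` modulo `2^(n-2j)`, and there are `2^j`
times as many of them as square roots of `b` modulo `2^(n-2j)`. By Hensel's lemma `b` is the square
of a unit of `ℤ₂`, so `b` has as many square roots modulo `2^m` as `1` has; those are the `y` with
`y ≡ ±1 (mod 2^(m-1))`, four of them when `m ≥ 3`.
-/

theorem AddMonoidHom.card_subtype_comp_of_surjective {G H : Type*} [AddGroup G] [AddGroup H]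
    (f : G →+ H) (hf : Function.Surjective f) (P : H → Prop) :
    Nat.card {g // P (f g)} = Nat.card {h // P h} * Nat.card f.ker := by
  let e : G ≃ H × f.ker := (AddSubgroup.addGroupEquivQuotientProdAddSubgroup (s := f.ker)).trans
    ((QuotientAddGroup.quotientKerEquivOfSurjective f hf).toEquiv.prodCongr (Equiv.refl _))
  have he (g : G) : (e g).1 = f g := rfl
  rw [Nat.card_congr ((e.subtypeEquiv fun g => by rw [he]).trans
    Equiv.prodSubtypeFstEquivSubtypeProd), Nat.card_prod]

theorem ZMod.card_subtype_castHom {m n : ℕ} [NeZero m] (h : m ∣ n) (P : ZMod m → Prop) :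
    Nat.card {y : ZMod n // P (castHom h (ZMod m) y)} = Nat.card {z // P z} * (n / m) := by
  let f := (castHom h (ZMod m)).toAddMonoidHom
  have hf : Function.Surjective f := castHom_surjective h
  have hn := f.card_subtype_comp_of_surjective hf fun _ => True
  simp only [Nat.card_subtype_true, Nat.card_zmod] at hn
  rw [show n / m = Nat.card f.ker from Nat.div_eq_of_eq_mul_right (NeZero.pos m) hn]
  exact f.card_subtype_comp_of_surjective hf P

theorem ZMod.card_sq_eq_sq_mul (e N : ℕ) [NeZero e] (b : ℤ) :
    Nat.card {x : ZMod (e ^ 2 * N) // x ^ 2 = (((e : ℤ) ^ 2 * b : ℤ) : ZMod (e ^ 2 * N))} =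
      Nat.card {y : ZMod (e * N) // castHom (dvd_mul_left N e) (ZMod N) y ^ 2 = b} := by
  have he : (e : ℤ) ≠ 0 := Nat.cast_ne_zero.mpr (NeZero.ne e)
  let φ : ZMod (e * N) →+ ZMod (e ^ 2 * N) := lift _
    ⟨(AddMonoidHom.mulLeft (e : ZMod (e ^ 2 * N))).comp (Int.castAddHom _), by
      change (e : ZMod (e ^ 2 * N)) * (((e * N : ℕ) : ℤ) : ZMod _) = 0
      rw [Int.cast_natCast, ← Nat.cast_mul, ← mul_assoc, ← sq, natCast_self]⟩
  have hφ (y : ℤ) : φ y = ((e * y : ℤ) : ZMod (e ^ 2 * N)) := by simp [φ]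
  have hsq (y : ℤ) : ((e * y : ℤ) : ZMod (e ^ 2 * N)) ^ 2 = (((e : ℤ) ^ 2 * b : ℤ) : ZMod _) ↔
      (y : ZMod N) ^ 2 = b := by
    rw [← Int.cast_pow, ← Int.cast_pow, intCast_eq_intCast_iff_dvd_sub,
      intCast_eq_intCast_iff_dvd_sub, show (e : ℤ) ^ 2 * b - (e * y) ^ 2 = e ^ 2 * (b - y ^ 2) by ring]
    push_cast
    exact mul_dvd_mul_iff_left (pow_ne_zero 2 he)
  let F : {y : ZMod (e * N) // castHom (dvd_mul_left N e) (ZMod N) y ^ 2 = b} →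
      {x : ZMod (e ^ 2 * N) // x ^ 2 = (((e : ℤ) ^ 2 * b : ℤ) : ZMod (e ^ 2 * N))} :=
    fun ⟨y, hy⟩ => ⟨φ y, by
      obtain ⟨y, rfl⟩ := intCast_surjective y
      rw [hφ, hsq]
      simpa using hy⟩
  refine (Nat.card_eq_of_bijective F ⟨?_, ?_⟩).symm
  · rintro ⟨y₁, hy₁⟩ ⟨y₂, hy₂⟩ h
    obtain ⟨y₁, rfl⟩ := intCast_surjective y₁
    obtain ⟨y₂, rfl⟩ := intCast_surjective y₂
    simp only [F, Subtype.mk.injEq, hφ, intCast_eq_intCast_iff_dvd_sub] at h ⊢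
    push_cast at h ⊢
    rw [← mul_sub, sq, mul_assoc] at h
    exact (mul_dvd_mul_iff_left he).mp h
  · rintro ⟨x, hx⟩
    obtain ⟨x, rfl⟩ := intCast_surjective x
    have hdvd : (e : ℤ) ^ 2 * N ∣ e ^ 2 * b - x ^ 2 := by
      rw [← Int.cast_pow, intCast_eq_intCast_iff_dvd_sub] at hx
      exact_mod_cast hx
    obtain ⟨y, rfl⟩ : (e : ℤ) ∣ x := (Int.pow_dvd_pow_iff two_ne_zero).mp <|
      (dvd_sub_right (dvd_mul_right _ _)).mp ((dvd_mul_right _ _).trans hdvd)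
    exact ⟨⟨y, by simpa using (hsq y).mp hx⟩, Subtype.ext (hφ y)⟩

theorem Int.two_pow_succ_dvd_sq_sub_one_iff {m : ℕ} (hm : 1 ≤ m) (y : ℤ) :
    2 ^ (m + 1) ∣ y ^ 2 - 1 ↔ 2 ^ m ∣ y - 1 ∨ 2 ^ m ∣ y + 1 := by
  obtain ⟨k, rfl⟩ := Nat.exists_eq_add_of_le' hm
  have two_dvd {l : ℕ} {x : ℤ} (h : 2 ^ (l + 1) ∣ x) : 2 ∣ x :=
    (dvd_pow_self 2 l.succ_ne_zero).trans h
  rcases even_or_odd' y with ⟨w, rfl | rfl⟩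
  · refine iff_of_false (fun h => ?_) (fun h => ?_)
    · have := two_dvd h
      rw [show (2 * w) ^ 2 - 1 = 2 * (2 * w ^ 2) - 1 by ring] at this
      omega
    · rcases h with h | h <;> have := two_dvd h <;> omega
  · rw [show (2 * w + 1) ^ 2 - 1 = 2 ^ 2 * (w * (w + 1)) by ring,
      show (2 : ℤ) ^ (k + 1 + 1) = 2 ^ 2 * 2 ^ k by ring, show (2 : ℤ) ^ (k + 1) = 2 * 2 ^ k by ring,
      add_sub_cancel_right, show 2 * w + 1 + 1 = 2 * (w + 1) by ring,
      mul_dvd_mul_iff_left (by norm_num), mul_dvd_mul_iff_left two_ne_zero,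
      mul_dvd_mul_iff_left two_ne_zero]
    refine ⟨fun h => ?_, fun h => h.elim (·.mul_right _) (·.mul_left _)⟩
    rcases even_or_odd w with hw | hw
    · exact .inl (prime_two.pow_dvd_of_dvd_mul_right _
        (by simpa [even_add_one, ← even_iff_two_dvd] using hw) h)
    · exact .inr (prime_two.pow_dvd_of_dvd_mul_left _
        (by simpa [← even_iff_two_dvd, not_even_iff_odd] using hw) h)

theorem ZMod.intCast_two_pow_eq_zero_iff (m : ℕ) (x : ℤ) : (x : ZMod (2 ^ m)) = 0 ↔ 2 ^ m ∣ x := by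
  exact_mod_cast intCast_zmod_eq_zero_iff_dvd x (2 ^ m)

theorem ZMod.sq_eq_one_iff_castHom_two_pow {m : ℕ} (hm : 1 ≤ m) (y : ZMod (2 ^ (m + 1))) :
    y ^ 2 = 1 ↔ castHom (pow_dvd_pow 2 m.le_succ) (ZMod (2 ^ m)) y = 1 ∨
      castHom (pow_dvd_pow 2 m.le_succ) (ZMod (2 ^ m)) y = -1 := by
  obtain ⟨y, rfl⟩ := intCast_surjective y
  have key := Int.two_pow_succ_dvd_sq_sub_one_iff hm y
  simp only [← intCast_two_pow_eq_zero_iff, Int.cast_sub, Int.cast_add, Int.cast_pow,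
    Int.cast_one] at key
  simpa only [map_intCast, sub_eq_zero, ← eq_neg_iff_add_eq_zero] using key

theorem ZMod.card_sq_eq_one_two_pow {m : ℕ} (hm : 3 ≤ m) :
    Nat.card {y : ZMod (2 ^ m) // y ^ 2 = 1} = 4 := by
  obtain ⟨k, rfl⟩ := Nat.exists_eq_add_of_le' (show 1 ≤ m by omega)
  have : Fact (2 < 2 ^ k) := ⟨calc 2 < 2 ^ 2 := by norm_num
    _ ≤ 2 ^ k := Nat.pow_le_pow_right two_pos (by omega)⟩
  rw [Nat.card_congr (Equiv.subtypeEquivRight fun y => sq_eq_one_iff_castHom_two_pow (by omega) y),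
    card_subtype_castHom _ fun z => z = 1 ∨ z = -1, pow_succ,
    Nat.mul_div_cancel_left _ (by positivity)]
  change Nat.card ({1, -1} : Set (ZMod (2 ^ k))) * 2 = 4
  rw [Nat.card_coe_set_eq, Set.ncard_pair neg_one_ne_one.symm]

theorem PadicInt.exists_sq_eq_of_eight_dvd_sub_one {c : ℤ} (hc : 8 ∣ c - 1) :
    ∃ z : ℤ_[2], z ^ 2 = c ∧ IsUnit z := by
  have : Fact (Nat.Prime 2) := ⟨Nat.prime_two⟩
  have h2 : ‖(2 : ℤ_[2])‖ = 2⁻¹ := norm_p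
  open Polynomial in
  have hnorm : ‖(X ^ 2 - C c : ℤ[X]).aeval (1 : ℤ_[2])‖ <
      ‖(X ^ 2 - C c : ℤ[X]).derivative.aeval (1 : ℤ_[2])‖ ^ 2 := by
    have h1 : ‖((1 - c : ℤ) : ℤ_[2])‖ ≤ (2 : ℝ) ^ (-(3 : ℕ) : ℤ) :=
      norm_int_le_pow_iff_dvd.mpr (by simpa [dvd_sub_comm] using hc)
    simp [map_ofNat, h2] at h1 ⊢
    linarith
  obtain ⟨z, hz, hz1, -⟩ := hensels_lemma hnorm
  refine ⟨z, by simpa [sub_eq_zero] using hz, isUnit_iff.mpr ?_⟩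
  have hlt : ‖z - 1‖ < ‖(1 : ℤ_[2])‖ := by
    simp [map_ofNat, h2] at hz1 ⊢
    linarith
  rw [← sub_add_cancel z 1, norm_add_eq_max_of_ne hlt.ne, max_eq_right hlt.le, norm_one]

theorem ZMod.card_sq_eq_of_eight_dvd_sub_one {m : ℕ} (hm : 3 ≤ m) {c : ℤ} (hc : 8 ∣ c - 1) :
    Nat.card {y : ZMod (2 ^ m) // y ^ 2 = c} = 4 := by
  have : Fact (Nat.Prime 2) := ⟨Nat.prime_two⟩
  obtain ⟨z, hz, hunit⟩ := PadicInt.exists_sq_eq_of_eight_dvd_sub_one hc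
  let u := (hunit.map (PadicInt.toZModPow m)).unit
  have hu : ((u ^ 2 : (ZMod (2 ^ m))ˣ) : ZMod (2 ^ m)) = c := by
    simp [u, ← map_pow, hz]
  rw [← card_sq_eq_one_two_pow hm]
  refine Nat.card_congr ((Units.mulLeft u⁻¹).subtypeEquiv fun y => ?_)
  rw [Units.mulLeft_apply, mul_pow, ← Units.val_pow_eq_pow_val, inv_pow, Units.inv_mul_eq_one, hu,
    eq_comm]

theorem stmt_17_general (n : ℕ) (hn : 3 ≤ n) (a : ℤ) (j : ℕ)
    (hval : padicValInt 2 a = 2 * j) (hjn : 2 * j ≤ n - 3)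
    (hodd : a / 2 ^ (2 * j) ≡ 1 [ZMOD 8]) :
    Nat.card {x : ZMod (2 ^ n) // x ^ 2 = (a : ZMod (2 ^ n))} = 2 ^ (j + 2) := by
  obtain ⟨k, hk, rfl⟩ : ∃ k, 3 ≤ k ∧ n = 2 * j + k := ⟨n - 2 * j, by omega, by omega⟩
  set b := a / 2 ^ (2 * j)
  have hab : a = ((2 ^ j : ℕ) : ℤ) ^ 2 * b := by
    have hdvd : (2 : ℤ) ^ (2 * j) ∣ a := hval ▸ padicValInt_dvd a
    rw [Nat.cast_pow, Nat.cast_ofNat, ← pow_mul, mul_comm j 2, Int.mul_ediv_cancel' hdvd]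
  rw [show 2 ^ (2 * j + k) = (2 ^ j) ^ 2 * 2 ^ k by ring, hab, ZMod.card_sq_eq_sq_mul,
    ZMod.card_subtype_castHom _ fun z => z ^ 2 = (b : ZMod (2 ^ k)),
    ZMod.card_sq_eq_of_eight_dvd_sub_one hk hodd.symm.dvd, Nat.mul_div_cancel _ (by positivity)]
  ring

theorem stmt_17 (n : ℕ) (hn : 3 ≤ n) (a : ℤ) (ha : a ≠ 0) (j : ℕ)
    (hval : padicValInt 2 a = 2 * j) (hjn : 2 * j ≤ n - 3)
    (hodd : a / 2 ^ (2 * j) ≡ 1 [ZMOD 8]) :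
    Nat.card {x : ZMod (2 ^ n) // x ^ 2 = (a : ZMod (2 ^ n))} = 2 ^ (j + 2) :=
  stmt_17_general n hn a j hval hjn hodd
end

section
/- For any a, b, c and n ≥ 1, if the equation a·x² + b·x + c ≡ 0 (mod 2^n) has at least one solution, then the number of its solutions in ℤ/2^nℤ is a power of two. -/
open Finset

def cnt (A D : ℤ) (n : ℕ) : ℕ :=
  ((Finset.range (2 ^ n)).filter (fun t : ℕ => (2 ^ n : ℤ) ∣ A * (t : ℤ) ^ 2 + D * t)).card

lemma split_range (P : ℕ → Prop) [DecidablePred P] (m : ℕ) :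
    ((Finset.range (2 * m)).filter P).card
      = ((Finset.range m).filter P).card
        + ((Finset.range m).filter (fun t => P (m + t))).card := by
  rw [two_mul, Finset.range_add, Finset.filter_union, Finset.card_union_of_disjoint,
    Finset.filter_map, Finset.card_map]
  · rfl
  · refine Finset.disjoint_filter_filter ?_
    rw [Finset.disjoint_left]
    intro x hx hx2
    simp only [Finset.mem_range, Finset.mem_map, addLeftEmbedding_apply] at hx hx2
    omega

lemma P1 (A D : ℤ) (m : ℕ) :
    ((Finset.range (2 * m)).filter (fun t : ℕ => (m : ℤ) ∣ A * (t : ℤ) ^ 2 + D * t)).card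
      = 2 * ((Finset.range m).filter (fun t : ℕ => (m : ℤ) ∣ A * (t : ℤ) ^ 2 + D * t)).card := by
  rw [split_range]
  have key : ∀ t : ℕ, ((m : ℤ) ∣ A * ((m : ℤ) + (t : ℤ)) ^ 2 + D * ((m : ℤ) + (t : ℤ)))
      ↔ ((m : ℤ) ∣ A * (t : ℤ) ^ 2 + D * t) := by
    intro t
    have he : A * ((m : ℤ) + (t : ℤ)) ^ 2 + D * ((m : ℤ) + (t : ℤ))
        = (A * (t : ℤ) ^ 2 + D * t) + (m : ℤ) * (A * m + 2 * A * t + D) := by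
      ring
    rw [he]
    constructor
    · intro h
      have h2 : (m : ℤ) ∣ (m : ℤ) * (A * m + 2 * A * t + D) := Dvd.intro _ rfl
      have := dvd_sub h h2; simpa using this
    · intro h
      exact dvd_add h (Dvd.intro _ rfl)
  have heq : ((Finset.range m).filter (fun t : ℕ => (m : ℤ) ∣ A * ((m + t : ℕ) : ℤ) ^ 2 + D * ((m + t : ℕ) : ℤ)))
      = ((Finset.range m).filter (fun t : ℕ => (m : ℤ) ∣ A * (t : ℤ) ^ 2 + D * t)) := by
    apply Finset.filter_congr; intro t _
    push_cast
    simp [key t]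
  rw [heq]; ring

lemma core (M x y : ℤ) (hM : M ≠ 0) (hy : Odd y) :
    ((2 * M ∣ x ∨ 2 * M ∣ x + M * y) ↔ M ∣ x) ∧ ¬(2 * M ∣ x ∧ 2 * M ∣ x + M * y) := by
  constructor
  · constructor
    · rintro (h | h)
      · exact dvd_trans ⟨2, by ring⟩ h
      · have h1 : M ∣ x + M * y := dvd_trans ⟨2, by ring⟩ h
        have h2 : M ∣ M * y := Dvd.intro _ rfl
        have := dvd_sub h1 h2; simpa using this
    · rintro ⟨z, rfl⟩
      rcases Int.even_or_odd z with hz | hz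
      · left
        obtain ⟨w, rfl⟩ := hz
        exact ⟨w, by ring⟩
      · right
        have : Even (z + y) := Odd.add_odd hz hy
        obtain ⟨w, hw⟩ := this
        exact ⟨w, by rw [show M * z + M * y = M * (z + y) by ring, hw]; ring⟩
  · rintro ⟨h1, h2⟩
    have h3 : 2 * M ∣ M * y := by
      have := dvd_sub h2 h1; simpa using this
    have h4 : M * 2 ∣ M * y := by rwa [mul_comm] at h3
    rw [mul_dvd_mul_iff_left hM] at h4
    rw [Int.odd_iff] at hy
    omega

lemma P2 (A D : ℤ) (hD : Odd D) (m : ℕ) (hm : 2 ∣ m) (hm0 : m ≠ 0) :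
    ((Finset.range (2 * m)).filter
        (fun t : ℕ => (2 * (m : ℤ)) ∣ A * (t : ℤ) ^ 2 + D * t)).card
      = ((Finset.range m).filter (fun t : ℕ => (m : ℤ) ∣ A * (t : ℤ) ^ 2 + D * t)).card := by
  have hM : (m : ℤ) ≠ 0 := by exact_mod_cast hm0
  have hMe : (2 : ℤ) ∣ (m : ℤ) := by exact_mod_cast hm
  rw [split_range]
  have hy : ∀ t : ℕ, Odd (A * (m : ℤ) + 2 * A * t + D) := by
    intro t
    obtain ⟨u, hu⟩ := hMe
    have he : A * (m : ℤ) + 2 * A * t + D = 2 * (A * u + A * t) + D := by rw [hu]; ring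
    rw [he]
    exact (Even.add_odd ⟨A * u + A * t, by ring⟩ hD)
  have h2 : ((Finset.range m).filter
        (fun t : ℕ => (2 * (m : ℤ)) ∣ A * ((m + t : ℕ) : ℤ) ^ 2 + D * ((m + t : ℕ) : ℤ)))
      = (Finset.range m).filter
        (fun t : ℕ => (2 * (m : ℤ)) ∣ (A * (t : ℤ) ^ 2 + D * t) + (m : ℤ) * (A * m + 2 * A * t + D)) := by
    apply Finset.filter_congr; intro t _
    have he : A * ((m + t : ℕ) : ℤ) ^ 2 + D * ((m + t : ℕ) : ℤ)
        = (A * (t : ℤ) ^ 2 + D * t) + (m : ℤ) * (A * m + 2 * A * t + D) := by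
      push_cast; ring
    rw [he]
  rw [h2]
  have hie := Finset.card_union_add_card_inter
    ((Finset.range m).filter (fun t : ℕ => (2 * (m : ℤ)) ∣ A * (t : ℤ) ^ 2 + D * t))
    ((Finset.range m).filter
      (fun t : ℕ => (2 * (m : ℤ)) ∣ (A * (t : ℤ) ^ 2 + D * t) + (m : ℤ) * (A * m + 2 * A * t + D)))
  rw [← Finset.filter_or, ← Finset.filter_and] at hie
  have hand : (Finset.range m).filter
      (fun t : ℕ => (2 * (m : ℤ) ∣ A * (t : ℤ) ^ 2 + D * t)
        ∧ (2 * (m : ℤ)) ∣ (A * (t : ℤ) ^ 2 + D * t) + (m : ℤ) * (A * m + 2 * A * t + D)) = ∅ := by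
    rw [Finset.filter_eq_empty_iff]
    intro t _
    exact (core (m : ℤ) (A * (t : ℤ) ^ 2 + D * t) (A * (m : ℤ) + 2 * A * t + D) hM (hy t)).2
  have hor : (Finset.range m).filter
      (fun t : ℕ => (2 * (m : ℤ) ∣ A * (t : ℤ) ^ 2 + D * t)
        ∨ (2 * (m : ℤ)) ∣ (A * (t : ℤ) ^ 2 + D * t) + (m : ℤ) * (A * m + 2 * A * t + D)) =
      (Finset.range m).filter (fun t : ℕ => (m : ℤ) ∣ A * (t : ℤ) ^ 2 + D * t) := by
    apply Finset.filter_congr; intro t _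
    simpa using (core (m : ℤ) (A * (t : ℤ) ^ 2 + D * t) (A * (m : ℤ) + 2 * A * t + D) hM (hy t)).1
  rw [hand, hor] at hie
  simp only [Finset.card_empty, add_zero] at hie
  omega

lemma P3 (A D : ℤ) (hA : Odd A) (m : ℕ) :
    ((Finset.range (4 * m)).filter
        (fun t : ℕ => (4 * (m : ℤ)) ∣ A * (t : ℤ) ^ 2 + 2 * D * t)).card
      = ((Finset.range (2 * m)).filter (fun s : ℕ => (m : ℤ) ∣ A * (s : ℤ) ^ 2 + D * s)).card := by
  symm
  apply Finset.card_bij (fun (s : ℕ) (_ : s ∈ _) => 2 * s)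
  · intro s hs
    simp only [Finset.mem_filter, Finset.mem_range] at hs ⊢
    obtain ⟨hs1, hs2⟩ := hs
    constructor
    · omega
    · have he : A * ((2 * s : ℕ) : ℤ) ^ 2 + 2 * D * ((2 * s : ℕ) : ℤ)
          = 4 * (A * (s : ℤ) ^ 2 + D * s) := by push_cast; ring
      rw [he]
      exact mul_dvd_mul_left 4 hs2
  · intro a _ b _ h; omega
  · intro b hb
    simp only [Finset.mem_filter, Finset.mem_range] at hb
    obtain ⟨hb1, hb2⟩ := hb
    have hm1 : 1 ≤ m := by by_contra h; omega
    -- b must be even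
    have hbe : ¬ Odd b := by
      intro hbo
      have hodd : Odd (A * (b : ℤ) ^ 2 + 2 * D * b) := by
        have h1 : Odd ((b : ℤ)) := by exact_mod_cast hbo
        have h2 : Odd (A * (b : ℤ) ^ 2) := hA.mul (h1.pow)
        have h3 : Even (2 * D * (b : ℤ)) := ⟨D * b, by ring⟩
        exact h2.add_even h3
      have h2d : (2 : ℤ) ∣ A * (b : ℤ) ^ 2 + 2 * D * b :=
        dvd_trans ⟨2 * (m : ℤ), by ring⟩ hb2
      rw [Int.odd_iff] at hodd
      omega
    rw [Nat.not_odd_iff_even] at hbe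
    obtain ⟨s, hs⟩ := hbe
    refine ⟨s, ?_, by omega⟩
    simp only [Finset.mem_filter, Finset.mem_range]
    constructor
    · omega
    · have he : A * (b : ℤ) ^ 2 + 2 * D * b = 4 * (A * (s : ℤ) ^ 2 + D * s) := by
        have : (b : ℤ) = 2 * s := by exact_mod_cast (by omega : b = 2 * s)
        rw [this]; ring
      rw [he] at hb2
      have : (4 : ℤ) * (m : ℤ) ∣ 4 * (A * (s : ℤ) ^ 2 + D * s) := hb2
      rwa [mul_dvd_mul_iff_left (by norm_num : (4:ℤ) ≠ 0)] at this

lemma cnt_zero (A D : ℤ) : cnt A D 0 = 1 := by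
  simp [cnt]

lemma cnt_one (A D : ℤ) : cnt A D 1 = 1 ∨ cnt A D 1 = 2 := by
  have h1 : (0 : ℕ) ∈ (Finset.range (2 ^ 1)).filter
      (fun t : ℕ => (2 ^ 1 : ℤ) ∣ A * (t : ℤ) ^ 2 + D * t) := by
    simp
  have h2 := Finset.card_filter_le (Finset.range (2 ^ 1))
      (fun t : ℕ => (2 ^ 1 : ℤ) ∣ A * (t : ℤ) ^ 2 + D * t)
  have h3 := Finset.card_pos.mpr ⟨0, h1⟩
  simp only [Finset.card_range] at h2
  unfold cnt
  omega

lemma step_ee (A' D' : ℤ) (n : ℕ) :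
    cnt (2 * A') (2 * D') (n + 2) = 2 * cnt A' D' (n + 1) := by
  have p1 := P1 A' D' (2 ^ (n + 1))
  push_cast at p1
  unfold cnt
  have hr : (2 : ℕ) ^ (n + 2) = 2 * 2 ^ (n + 1) := by ring
  rw [hr]
  rw [Finset.filter_congr (fun t _ => ?_ : ∀ t ∈ Finset.range (2 * 2 ^ (n + 1)),
    ((2 ^ (n + 2) : ℤ) ∣ (2 * A') * (t : ℤ) ^ 2 + (2 * D') * t)
      ↔ ((2 ^ (n + 1) : ℤ) ∣ A' * (t : ℤ) ^ 2 + D' * t))]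
  · exact p1
  · have e1 : (2 * A') * (t : ℤ) ^ 2 + (2 * D') * t = 2 * (A' * (t : ℤ) ^ 2 + D' * t) := by ring
    have e2 : (2 ^ (n + 2) : ℤ) = 2 * (2 ^ (n + 1) : ℤ) := by ring
    rw [e1, e2, mul_dvd_mul_iff_left (two_ne_zero)]

lemma step_eo (A D' : ℤ) (hA : Odd A) (n : ℕ) :
    cnt A (2 * D') (n + 2) = 2 * cnt A D' n := by
  have p3 := P3 A D' hA (2 ^ n)
  have p1 := P1 A D' (2 ^ n)
  push_cast at p3 p1
  unfold cnt
  have hr : (2 : ℕ) ^ (n + 2) = 4 * 2 ^ n := by ring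
  rw [hr]
  rw [Finset.filter_congr (fun t _ => ?_ : ∀ t ∈ Finset.range (4 * 2 ^ n),
    ((2 ^ (n + 2) : ℤ) ∣ A * (t : ℤ) ^ 2 + (2 * D') * t)
      ↔ (4 * (2 ^ n : ℤ) ∣ A * (t : ℤ) ^ 2 + 2 * D' * t))]
  · rw [p3, p1]
  · have e2 : (2 ^ (n + 2) : ℤ) = 4 * (2 ^ n : ℤ) := by ring
    rw [e2]

lemma step_odd (A D : ℤ) (hD : Odd D) (n : ℕ) :
    cnt A D (n + 2) = cnt A D (n + 1) := by
  have p2 := P2 A D hD (2 ^ (n + 1)) ⟨2 ^ n, by ring⟩ (by positivity)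
  push_cast at p2
  unfold cnt
  have hr : (2 : ℕ) ^ (n + 2) = 2 * 2 ^ (n + 1) := by ring
  rw [hr]
  rw [Finset.filter_congr (fun t _ => ?_ : ∀ t ∈ Finset.range (2 * 2 ^ (n + 1)),
    ((2 ^ (n + 2) : ℤ) ∣ A * (t : ℤ) ^ 2 + D * t)
      ↔ (2 * (2 ^ (n + 1) : ℤ) ∣ A * (t : ℤ) ^ 2 + D * t))]
  · exact p2
  · have e2 : (2 ^ (n + 2) : ℤ) = 2 * (2 ^ (n + 1) : ℤ) := by ring
    rw [e2]

lemma key : ∀ n : ℕ, ∀ A D : ℤ, ∃ k : ℕ, cnt A D n = 2 ^ k := by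
  intro n
  induction n using Nat.strong_induction_on with
  | _ n ih =>
    match n with
    | 0 => exact fun A D => ⟨0, cnt_zero A D⟩
    | 1 =>
      intro A D
      rcases cnt_one A D with h | h
      · exact ⟨0, by simpa using h⟩
      · exact ⟨1, by simpa using h⟩
    | (n + 2) =>
      intro A D
      rcases Int.even_or_odd D with hD | hD
      · obtain ⟨D', rfl⟩ : ∃ D', D = 2 * D' := by
          obtain ⟨D', h⟩ := hD; exact ⟨D', by omega⟩
        rcases Int.even_or_odd A with hA | hA
        · obtain ⟨A', rfl⟩ : ∃ A', A = 2 * A' := by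
            obtain ⟨A', h⟩ := hA; exact ⟨A', by omega⟩
          obtain ⟨k, hk⟩ := ih (n + 1) (by omega) A' D'
          exact ⟨k + 1, by rw [step_ee, hk]; ring⟩
        · obtain ⟨k, hk⟩ := ih n (by omega) A D'
          exact ⟨k + 1, by rw [step_eo A D' hA, hk]; ring⟩
      · obtain ⟨k, hk⟩ := ih (n + 1) (by omega) A D
        exact ⟨k, by rw [step_odd A D hD, hk]⟩

lemma card_sol (n : ℕ) (A D : ℤ) :
    Nat.card {t : ZMod (2 ^ n) // (A : ZMod (2 ^ n)) * t ^ 2 + D * t = 0} = cnt A D n := by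
  have hne : NeZero ((2 : ℕ) ^ n) := ⟨by positivity⟩
  have hcast : ∀ x : ZMod (2 ^ n),
      ((A * (x.val : ℤ) ^ 2 + D * (x.val : ℤ) : ℤ) : ZMod (2 ^ n))
        = (A : ZMod (2 ^ n)) * x ^ 2 + D * x := by
    intro x
    push_cast
    simp [ZMod.natCast_val, ZMod.cast_id']
  have hiff : ∀ x : ZMod (2 ^ n),
      ((A : ZMod (2 ^ n)) * x ^ 2 + D * x = 0)
        ↔ ((2 ^ n : ℤ) ∣ A * (x.val : ℤ) ^ 2 + D * (x.val : ℤ)) := by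
    intro x
    rw [← hcast x, ZMod.intCast_zmod_eq_zero_iff_dvd]
    push_cast
    rfl
  rw [Nat.card_eq_fintype_card, Fintype.card_subtype]
  unfold cnt
  apply Finset.card_bij (fun (x : ZMod (2 ^ n)) (_ : x ∈ Finset.filter
    (fun x => (A : ZMod (2 ^ n)) * x ^ 2 + D * x = 0) Finset.univ) => x.val)
  · intro x hx
    simp only [Finset.mem_filter, Finset.mem_univ, true_and] at hx
    simp only [Finset.mem_filter, Finset.mem_range]
    exact ⟨ZMod.val_lt x, (hiff x).mp hx⟩
  · intro a _ b _ h
    exact ZMod.val_injective _ h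
  · intro t ht
    simp only [Finset.mem_filter, Finset.mem_range] at ht
    obtain ⟨ht1, ht2⟩ := ht
    refine ⟨(t : ZMod (2 ^ n)), ?_, ZMod.val_cast_of_lt ht1⟩
    simp only [Finset.mem_filter, Finset.mem_univ, true_and]
    rw [hiff, ZMod.val_cast_of_lt ht1]
    exact ht2

theorem stmt_19 (n : ℕ) (hn : 1 ≤ n) (a b c : ℤ)
    (h : ∃ x : ZMod (2 ^ n), (a : ZMod (2 ^ n)) * x ^ 2 + b * x + c = 0) :
    ∃ k : ℕ, Nat.card {x : ZMod (2 ^ n) // (a : ZMod (2 ^ n)) * x ^ 2 + b * x + c = 0} =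
      2 ^ k := by
  obtain ⟨x0, hx0⟩ := h
  have hne : NeZero ((2 : ℕ) ^ n) := ⟨by positivity⟩
  set D : ℤ := 2 * a * (x0.val : ℤ) + b with hDdef
  obtain ⟨k, hk⟩ := key n a D
  rw [← card_sol n a D] at hk
  refine ⟨k, ?_⟩
  rw [← hk]
  have hx0c : (((x0.val : ℤ) : ZMod (2 ^ n))) = x0 := by
    push_cast
    simp [ZMod.natCast_val, ZMod.cast_id']
  have hD : ((D : ℤ) : ZMod (2 ^ n)) = 2 * (a : ZMod (2 ^ n)) * x0 + b := by
    rw [hDdef]; push_cast [hx0c]; ring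
  have main : ∀ t : ZMod (2 ^ n),
      ((a : ZMod (2 ^ n)) * (x0 + t) ^ 2 + b * (x0 + t) + c = 0)
        ↔ ((a : ZMod (2 ^ n)) * t ^ 2 + (D : ZMod (2 ^ n)) * t = 0) := by
    intro t
    have expand : (a : ZMod (2 ^ n)) * (x0 + t) ^ 2 + b * (x0 + t) + c
        = ((a : ZMod (2 ^ n)) * x0 ^ 2 + b * x0 + c)
          + ((a : ZMod (2 ^ n)) * t ^ 2 + (2 * (a : ZMod (2 ^ n)) * x0 + b) * t) := by ring
    rw [expand, hx0, zero_add, ← hD]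
  refine Nat.card_congr ⟨fun p => ⟨p.1 - x0, ?_⟩, fun q => ⟨x0 + q.1, ?_⟩, fun p => ?_, fun q => ?_⟩
  · rw [← main]
    have : x0 + (p.1 - x0) = p.1 := by ring
    rw [this]
    exact p.2
  · exact (main q.1).mpr q.2
  · apply Subtype.ext
    show x0 + (p.1 - x0) = p.1
    ring
  · apply Subtype.ext
    show (x0 + q.1) - x0 = q.1
    ring
end
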